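/- arXiv:1605.04201 — 8 statements merged into one kernel-verified Lean document; each statement's English description precedes it below -/
import Mathlib

section
/- For any real numbers p ≥ 0, κ2 ∈ [0,1], φ2 ∈ ℝ, P1 > 0 and a12 > 0, the function (κ1, φ1) ↦ |p·κ2·a12·e^{iφ2} + P1·κ1·e^{iφ1}|² on [0,1] × ℝ attains its minimum at κ1* = min(p·κ2·a12/P1, 1) and φ1* = φ2 + π; that is, for all κ1 ∈ [0,1] and all φ1 ∈ ℝ one has |p·κ2·a12·e^{iφ2} + P1·κ1*·e^{i(φ2+π)}|² ≤ |p·κ2·a12·e^{iφ2} + P1·κ1·e^{iφ1}|². -/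
/-! Writing `u = e^{iφ2}` and `A = p·κ2·a12`, the phase `φ2 + π` turns the candidate vector into
`(A - min A P1)·u`, whose modulus is `max (A - P1) 0`. Any other choice has `|P1·κ1| ≤ P1`,
so by the reverse triangle inequality its modulus is at least `A - P1`, and it is always `≥ 0`. -/

open Complex

lemma mul_min_div_one {a P : ℝ} (hP : 0 < P) : P * min (a / P) 1 = min a P := by
  rw [mul_min_of_nonneg _ _ hP.le, mul_div_cancel₀ _ hP.ne', mul_one]

lemma Complex.exp_I_mul_ofReal_add_pi (θ : ℝ) :
    exp (I * ((θ + Real.pi : ℝ) : ℂ)) = -exp (I * θ) := by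
  rw [ofReal_add, mul_add, mul_comm I (Real.pi : ℂ), exp_add_pi_mul_I]

lemma Complex.norm_ofReal_mul_exp_I_mul (r θ : ℝ) : ‖(r : ℂ) * exp (I * θ)‖ = |r| := by
  rw [norm_mul, norm_exp_I_mul_ofReal, mul_one, norm_real, Real.norm_eq_abs]

lemma abs_sub_min_le_norm_add {E : Type*} [SeminormedAddGroup E] {x y : E} {a r : ℝ}
    (ha : a ≤ ‖x‖) (hy : ‖y‖ ≤ r) : |a - min a r| ≤ ‖x + y‖ := by
  rcases le_total a r with har | hra
  · rw [min_eq_left har, sub_self, abs_zero]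
    exact norm_nonneg _
  · rw [min_eq_right hra, abs_of_nonneg (sub_nonneg.mpr hra)]
    linarith [norm_sub_le_norm_add x y]

theorem stmt0_general (p κ2 φ2 P1 a12 : ℝ)
    (hP1 : 0 < P1) :
    ∀ κ1 ∈ Set.Icc (0:ℝ) 1, ∀ φ1 : ℝ,
      ‖((p * κ2 * a12 : ℝ) : ℂ) * Complex.exp (Complex.I * (φ2 : ℂ))
          + ((P1 * min (p * κ2 * a12 / P1) 1 : ℝ) : ℂ)
            * Complex.exp (Complex.I * ((φ2 + Real.pi : ℝ) : ℂ))‖ ^ 2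
      ≤ ‖((p * κ2 * a12 : ℝ) : ℂ) * Complex.exp (Complex.I * (φ2 : ℂ))
          + ((P1 * κ1 : ℝ) : ℂ) * Complex.exp (Complex.I * ((φ1 : ℝ) : ℂ))‖ ^ 2 := by
  intro κ1 ⟨hκ1_nonneg, hκ1_le_one⟩ φ1
  set A := p * κ2 * a12
  have h_opposite : (A : ℂ) * exp (I * φ2)
      + ((P1 * min (A / P1) 1 : ℝ) : ℂ) * exp (I * ((φ2 + Real.pi : ℝ) : ℂ))
      = ((A - min A P1 : ℝ) : ℂ) * exp (I * φ2) := by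
    rw [exp_I_mul_ofReal_add_pi, mul_min_div_one hP1]
    push_cast
    ring
  have hA : A ≤ ‖(A : ℂ) * exp (I * φ2)‖ := by
    rw [norm_ofReal_mul_exp_I_mul]
    exact le_abs_self A
  have hB : ‖((P1 * κ1 : ℝ) : ℂ) * exp (I * φ1)‖ ≤ P1 := by
    rw [norm_ofReal_mul_exp_I_mul, abs_of_nonneg (by positivity)]
    exact mul_le_of_le_one_right hP1.le hκ1_le_one
  rw [h_opposite, norm_ofReal_mul_exp_I_mul]
  exact pow_le_pow_left₀ (abs_nonneg _) (abs_sub_min_le_norm_add hA hB) 2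

/-- The squared modulus of the aggregate complementary variance at
receiver 1, `(κ1, φ1) ↦ |p·κ2·a12·e^{iφ2} + P1·κ1·e^{iφ1}|²` on `[0,1] × ℝ`,
attains its minimum at `κ1* = min (p·κ2·a12/P1) 1` and `φ1* = φ2 + π`. -/
theorem stmt0 (p κ2 φ2 P1 a12 : ℝ) (hp : 0 ≤ p) (hκ2 : κ2 ∈ Set.Icc (0:ℝ) 1)
    (hP1 : 0 < P1) (ha12 : 0 < a12) :
    ∀ κ1 ∈ Set.Icc (0:ℝ) 1, ∀ φ1 : ℝ,
      ‖((p * κ2 * a12 : ℝ) : ℂ) * Complex.exp (Complex.I * (φ2 : ℂ))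
          + ((P1 * min (p * κ2 * a12 / P1) 1 : ℝ) : ℂ)
            * Complex.exp (Complex.I * ((φ2 + Real.pi : ℝ) : ℂ))‖ ^ 2
      ≤ ‖((p * κ2 * a12 : ℝ) : ℂ) * Complex.exp (Complex.I * (φ2 : ℂ))
          + ((P1 * κ1 : ℝ) : ℂ) * Complex.exp (Complex.I * ((φ1 : ℝ) : ℂ))‖ ^ 2 :=
  stmt0_general p κ2 φ2 P1 a12 hP1
end

section
/- Assume 2·P1 > γ2. Then the function κ ↦ R2(qB(κ), κ) is strictly increasing on [0,1). -/
/-- Assume `2·P1 > γ2`. Then `κ ↦ R2(qB(κ), κ)` is strictly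
increasing on `[0,1)`, where `R2(p,κ) = (1/2)·log₂(1 + p·(p·(1−κ²) + 2))` and
`qB(κ) = (2·P1/γ2 − 1)/(a12·(1−κ))`. -/
theorem stmt5 (P1 P2 a12 α Rbar γ1 γ2 : ℝ)
    (hP1 : 0 < P1) (hP2 : 0 < P2) (ha12 : 0 < a12) (hα : α ∈ Set.Ioo (0:ℝ) 1)
    (hRbar : Rbar = α * Real.logb 2 (1 + P1))
    (hγ1 : γ1 = (1 + P1) ^ α - 1) (hγ2 : γ2 = (1 + P1) ^ (2 * α) - 1)
    (h2P1 : 2 * P1 > γ2)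
    (R2 : ℝ → ℝ → ℝ)
    (hR2 : ∀ p κ, R2 p κ = (1 / 2) * Real.logb 2 (1 + p * (p * (1 - κ ^ 2) + 2)))
    (qB : ℝ → ℝ)
    (hqB : ∀ κ, qB κ = (2 * P1 / γ2 - 1) / (a12 * (1 - κ))) :
    StrictMonoOn (fun κ => R2 (qB κ) κ) (Set.Ico 0 1) := by
  have hγ2pos : 0 < γ2 := by
    rw [hγ2]
    have : (1:ℝ) < (1 + P1) ^ (2 * α) := by
      apply Real.one_lt_rpow_iff_of_pos (by linarith) |>.2
      left
      exact ⟨by linarith, by nlinarith [hα.1]⟩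
    linarith
  set c := 2 * P1 / γ2 - 1 with hc
  have hcpos : 0 < c := by
    have : (1:ℝ) < 2 * P1 / γ2 := (one_lt_div hγ2pos).2 h2P1
    simp [hc]; linarith
  intro x hx y hy hxy
  obtain ⟨hx0, hx1⟩ := hx
  obtain ⟨hy0, hy1⟩ := hy
  have hdx : 0 < a12 * (1 - x) := by nlinarith
  have hdy : 0 < a12 * (1 - y) := by nlinarith
  simp only [hR2, hqB, ← hc]
  have hform : ∀ κ : ℝ, 0 < a12 * (1 - κ) →
      1 + c / (a12 * (1 - κ)) * (c / (a12 * (1 - κ)) * (1 - κ ^ 2) + 2)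
        = 1 + (c ^ 2 * (1 + κ) + 2 * c * a12) / (a12 ^ 2 * (1 - κ)) := by
    intro κ hκ
    have h1 : (1:ℝ) - κ ≠ 0 := by
      intro h; rw [h, mul_zero] at hκ; exact lt_irrefl 0 hκ
    field_simp
    ring
  rw [hform x hdx, hform y hdy]
  have hkey : (c ^ 2 * (1 + x) + 2 * c * a12) / (a12 ^ 2 * (1 - x))
      < (c ^ 2 * (1 + y) + 2 * c * a12) / (a12 ^ 2 * (1 - y)) := by
    rw [div_lt_div_iff₀ (by nlinarith) (by nlinarith)]
    nlinarith [sq_nonneg a12, sq_nonneg c, mul_pos hcpos ha12,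
      mul_pos (mul_pos hcpos hcpos) (sub_pos.2 hxy),
      mul_pos (mul_pos (mul_pos hcpos ha12) ha12) (sub_pos.2 hxy)]
  have hposx : 0 < 1 + (c ^ 2 * (1 + x) + 2 * c * a12) / (a12 ^ 2 * (1 - x)) := by
    have : 0 < (c ^ 2 * (1 + x) + 2 * c * a12) / (a12 ^ 2 * (1 - x)) := by
      apply div_pos (by nlinarith) (by nlinarith)
    linarith
  have hlog : Real.logb 2 (1 + (c ^ 2 * (1 + x) + 2 * c * a12) / (a12 ^ 2 * (1 - x)))
      < Real.logb 2 (1 + (c ^ 2 * (1 + y) + 2 * c * a12) / (a12 ^ 2 * (1 - y))) :=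
    Real.logb_lt_logb one_lt_two hposx (by linarith)
  linarith
end

section
/- (Lemma 2, first case.) If a12 ≥ μ(α) = 1 − P1/(γ2 − γ1), then the function κ ↦ R2(q(κ), κ) is monotonically nondecreasing on [0,1). -/
/-!
Write `x = p * a12`. The condition `Ψ ≥ R̄` becomes `0 ≤ margin x κ`, and the margin is
nondecreasing in `κ`, so the admissible sets grow with `κ`; `a12 * q κ` is their maximum, where the
margin vanishes by continuity. The compared quantity `gain = a12² (2^{2 R2} - 1)` satisfies
`(1 + γ2) gain = Φ x - margin - max 0 (x κ - P1)²` with a quadratic `Φ` that increases, with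
`(y - x)²` to spare, to the right of the point `(P1 - γ1) / γ1` admissible at `κ = 0`; this is
exactly where `a12 ≥ μ(α)` is needed. For `κ ≤ κ'` with maxima `x`, `y`, one compares `Φ` at `x`
and at `y - max 0 (y κ' - P1)`, which still dominates `x` unless both points are in the `R1B`
regime, where `gain` is monotone in `x (1 - κ)` and `x (1 + κ)` directly.
-/

open Set Real Pointwise

namespace ZInterference

/-- `rateArg p κ = 2 ^ (2 * R2 p κ)`; user 1 sees the same expression at `p * a12` as the
power of its interference plus noise. -/
def rateArg (x κ : ℝ) : ℝ := 1 + x * (x * (1 - κ ^ 2) + 2)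

/-- In the scaled power `x = p * a12`, user 1 meets its target rate iff `0 ≤ margin`; the
squared `max` term is what glues the `R1A` regime `x * κ < P1` to the `R1B` one. -/
def margin (P1 γ2 x κ : ℝ) : ℝ :=
  2 * P1 * (x * (1 + κ) + 1) + max 0 (P1 - x * κ) ^ 2 - γ2 * rateArg x κ

def admissibleSet (P1 γ2 κ : ℝ) : Set ℝ := {x | 0 ≤ x ∧ 0 ≤ margin P1 γ2 x κ}

def gain (a x κ : ℝ) : ℝ := x * (x * (1 - κ ^ 2) + 2 * a)

def potential (a P1 γ2 x : ℝ) : ℝ := (x + P1 + 1) ^ 2 + (1 + γ2) * (2 * (a - 1) * x - 1)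

variable {a P1 γ1 γ2 x y κ κ' : ℝ}

theorem rateArg_pos (hx : 0 ≤ x) (hκ0 : 0 ≤ κ) (hκ1 : κ ≤ 1) : 0 < rateArg x κ := by
  have : 0 ≤ 1 - κ ^ 2 := by nlinarith
  unfold rateArg; positivity

theorem gain_mul (a p κ : ℝ) : gain a (p * a) κ = a ^ 2 * (rateArg p κ - 1) := by
  unfold gain rateArg; ring

theorem margin_of_le (h : x * κ ≤ P1) :
    margin P1 γ2 x κ = (x + P1 + 1) ^ 2 - (1 + γ2) * rateArg x κ := by
  rw [margin, max_eq_right (by linarith)]; unfold rateArg; ring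

theorem margin_of_ge (h : P1 ≤ x * κ) :
    margin P1 γ2 x κ = (1 + x * (1 + κ)) * (2 * P1 - γ2 * (1 + x * (1 - κ))) := by
  rw [margin, max_eq_left (by linarith)]; unfold rateArg; ring

theorem le_of_margin_nonneg (hx : 0 ≤ x) (hκ : 0 ≤ κ) (h : P1 ≤ x * κ)
    (hm : 0 ≤ margin P1 γ2 x κ) : γ2 * (1 + x * (1 - κ)) ≤ 2 * P1 := by
  rw [margin_of_ge h] at hm
  have := (mul_nonneg_iff_of_pos_left (by positivity : 0 < 1 + x * (1 + κ))).mp hm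
  linarith

theorem eq_of_margin_eq_zero (hx : 0 ≤ x) (hκ : 0 ≤ κ) (h : P1 ≤ x * κ)
    (hm : margin P1 γ2 x κ = 0) : γ2 * (1 + x * (1 - κ)) = 2 * P1 := by
  rw [margin_of_ge h, mul_eq_zero] at hm
  rcases hm with hm | hm
  · nlinarith
  · linarith

theorem one_add_mul_gain (a P1 γ2 x κ : ℝ) :
    (1 + γ2) * gain a x κ
      = potential a P1 γ2 x - margin P1 γ2 x κ - max 0 (x * κ - P1) ^ 2 := by
  rcases le_total (x * κ) P1 with h | h
  · rw [margin_of_le h, max_eq_left (by linarith)]; unfold gain potential rateArg; ring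
  · rw [margin_of_ge h, max_eq_right (by linarith)]; unfold gain potential; ring

theorem margin_mono (hP1 : 0 ≤ P1) (hγ2 : 0 ≤ γ2) (hx : 0 ≤ x) (hκ : 0 ≤ κ) (hκκ' : κ ≤ κ') :
    margin P1 γ2 x κ ≤ margin P1 γ2 x κ' := by
  set s := max 0 (P1 - x * κ)
  set s' := max 0 (P1 - x * κ')
  have hxκ : x * κ ≤ x * κ' := mul_le_mul_of_nonneg_left hκκ' hx
  have hs's : s' ≤ s := max_le_max le_rfl (by linarith)
  have hss' : s - s' ≤ x * (κ' - κ) := by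
    have : s ≤ s' + x * (κ' - κ) :=
      max_le (by nlinarith [le_max_left 0 (P1 - x * κ')])
        (by linarith [le_max_right 0 (P1 - x * κ')])
    linarith
  have hsP : s + s' ≤ 2 * P1 := by
    have : ∀ t, 0 ≤ t → max 0 (P1 - t) ≤ P1 := fun t ht => max_le hP1 (by linarith)
    linarith [this _ (by positivity : 0 ≤ x * κ), this _ (mul_nonneg hx (hκ.trans hκκ'))]
  have hsq : s ^ 2 - s' ^ 2 ≤ x * (κ' - κ) * (2 * P1) := by
    have : s ^ 2 - s' ^ 2 = (s - s') * (s + s') := by ring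
    rw [this]
    exact mul_le_mul hss' hsP (by linarith [le_max_left 0 (P1 - x * κ')]) (by nlinarith)
  have hD : rateArg x κ' ≤ rateArg x κ := by
    have : κ ^ 2 ≤ κ' ^ 2 := pow_le_pow_left₀ hκ hκκ' 2
    unfold rateArg; nlinarith [mul_nonneg (sq_nonneg x) (sub_nonneg.2 this)]
  unfold margin
  nlinarith [mul_le_mul_of_nonneg_left hD hγ2]

theorem admissibleSet_mono (hP1 : 0 ≤ P1) (hγ2 : 0 ≤ γ2) (hκ : 0 ≤ κ) (hκκ' : κ ≤ κ') :
    admissibleSet P1 γ2 κ ⊆ admissibleSet P1 γ2 κ' :=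
  fun _ ⟨hx, hm⟩ => ⟨hx, hm.trans (margin_mono hP1 hγ2 hx hκ hκκ')⟩

theorem continuous_margin (P1 γ2 κ : ℝ) : Continuous fun x => margin P1 γ2 x κ := by
  unfold margin rateArg; fun_prop

theorem isClosed_admissibleSet (P1 γ2 κ : ℝ) : IsClosed (admissibleSet P1 γ2 κ) :=
  (isClosed_le continuous_const continuous_id).inter
    (isClosed_le continuous_const (continuous_margin P1 γ2 κ))

theorem zero_mem_admissibleSet (hP1 : 0 ≤ P1) (hγ2 : γ2 ≤ P1 ^ 2 + 2 * P1) :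
    0 ∈ admissibleSet P1 γ2 κ := by
  refine ⟨le_rfl, ?_⟩
  simp only [margin, rateArg, zero_mul, sub_zero, max_eq_right hP1]
  linarith

theorem bddAbove_admissibleSet (hP1 : 0 ≤ P1) (hγ2 : 0 < γ2) (hκ : 0 ≤ κ) (hκ1 : κ < 1) :
    BddAbove (admissibleSet P1 γ2 κ) := by
  refine ⟨(2 * P1 + P1 ^ 2) / (γ2 * (1 - κ)), fun x ⟨hx, hm⟩ => ?_⟩
  have hs : max 0 (P1 - x * κ) ≤ P1 := max_le hP1 (by nlinarith)
  have hv : 0 < 1 + x * (1 + κ) := by positivity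
  have hD : rateArg x κ = (1 + x * (1 - κ)) * (1 + x * (1 + κ)) := by unfold rateArg; ring
  have : γ2 * (1 + x * (1 - κ)) * (1 + x * (1 + κ)) ≤ (2 * P1 + P1 ^ 2) * (1 + x * (1 + κ)) := by
    unfold margin at hm
    rw [hD] at hm
    nlinarith [pow_le_pow_left₀ (le_max_left 0 _) hs 2,
      mul_nonneg (sq_nonneg P1) (by positivity : 0 ≤ x * (1 + κ))]
  have := le_of_mul_le_mul_right this hv
  rw [le_div_iff₀ (by nlinarith)]
  nlinarith

theorem isGreatest_sSup_admissibleSet (hP1 : 0 ≤ P1) (hγ2 : 0 < γ2)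
    (hγ2P : γ2 ≤ P1 ^ 2 + 2 * P1) (hκ : 0 ≤ κ) (hκ1 : κ < 1) :
    IsGreatest (admissibleSet P1 γ2 κ) (sSup (admissibleSet P1 γ2 κ)) :=
  (isClosed_admissibleSet P1 γ2 κ).isGreatest_csSup ⟨0, zero_mem_admissibleSet hP1 hγ2P⟩
    (bddAbove_admissibleSet hP1 hγ2 hκ hκ1)

theorem eq_zero_of_isGreatest {f : ℝ → ℝ} (hf : Continuous f) {m : ℝ}
    (h : IsGreatest {x | 0 ≤ x ∧ 0 ≤ f x} m) : f m = 0 := by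
  refine le_antisymm (not_lt.1 fun hpos => ?_) h.1.2
  obtain ⟨y, hmy, hy⟩ := (continuousAt_const.eventually_lt hf.continuousAt hpos).exists_gt
  exact (h.2 ⟨h.1.1.trans hmy.le, hy.le⟩).not_gt hmy

theorem margin_eq_zero_of_isGreatest (h : IsGreatest (admissibleSet P1 γ2 κ) x) :
    margin P1 γ2 x κ = 0 :=
  eq_zero_of_isGreatest (continuous_margin P1 γ2 κ) h

theorem div_mem_admissibleSet_zero (hγ1 : 0 < γ1) (hγ1P : γ1 ≤ P1)
    (hγ : 1 + γ2 = (1 + γ1) ^ 2) : (P1 - γ1) / γ1 ∈ admissibleSet P1 γ2 0 := by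
  have hx : 0 ≤ (P1 - γ1) / γ1 := div_nonneg (by linarith) hγ1.le
  refine ⟨hx, ?_⟩
  rw [margin_of_le (by simpa using hγ1.le.trans hγ1P), hγ]
  have h1 : 1 + (P1 - γ1) / γ1 = P1 / γ1 := by field_simp; ring
  have h2 : (P1 - γ1) / γ1 + P1 + 1 = (1 + γ1) * (P1 / γ1) := by field_simp; ring
  have h3 : rateArg ((P1 - γ1) / γ1) 0 = (P1 / γ1) ^ 2 := by rw [← h1]; unfold rateArg; ring
  rw [h2, h3]; ring_nf; exact le_rfl

theorem potential_add_sq_le (h : 0 ≤ x + P1 + 1 + (1 + γ2) * (a - 1)) (hxy : x ≤ y) :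
    potential a P1 γ2 x + (y - x) ^ 2 ≤ potential a P1 γ2 y := by
  unfold potential; nlinarith [mul_nonneg (sub_nonneg.2 hxy) h]

/-- This is where the hypothesis `μ(α) ≤ a12` enters: `γ2 - γ1 = γ1 (1 + γ1)`. -/
theorem potential_slope_nonneg (hγ1 : 0 < γ1) (hγ : 1 + γ2 = (1 + γ1) ^ 2)
    (hμ : (1 - a) * (γ1 * (1 + γ1)) ≤ P1) (hx : (P1 - γ1) / γ1 ≤ x) :
    0 ≤ x + P1 + 1 + (1 + γ2) * (a - 1) := by
  rw [div_le_iff₀ hγ1] at hx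
  rw [hγ]
  have : γ1 * ((1 + γ1) ^ 2 * (1 - a)) ≤ γ1 * (x + P1 + 1) := by nlinarith
  nlinarith [le_of_mul_le_mul_left this hγ1]

theorem admissibleSet_subset_Iic (hγ2 : 0 < γ2) (hκ0 : 0 < κ) (hκ1 : κ < 1)
    (hyκ : y * κ = P1) (hy : γ2 * (1 + y * (1 - κ)) = 2 * P1) :
    admissibleSet P1 γ2 κ ⊆ Iic y := by
  rintro x ⟨hx, hm⟩
  rcases le_total (x * κ) P1 with h | h
  · exact le_of_mul_le_mul_right (hyκ ▸ h) hκ0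
  · have := le_of_margin_nonneg hx hκ0.le h hm
    have : x * (1 - κ) ≤ y * (1 - κ) := by nlinarith
    exact le_of_mul_le_mul_right this (by linarith)

theorem le_sub_max_of_isGreatest (hP1 : 0 < P1) (hγ2 : 0 < γ2) (hκ1 : 0 ≤ κ) (h12 : κ ≤ κ')
    (hκ2 : κ' < 1) (hx : x ∈ admissibleSet P1 γ2 κ) (hxκ : x * κ ≤ P1)
    (hy : IsGreatest (admissibleSet P1 γ2 κ') y) : x ≤ y - max 0 (y * κ' - P1) := by
  rcases le_total (y * κ') P1 with h | h
  · rw [max_eq_left (by linarith), sub_zero]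
    exact hy.2 (admissibleSet_mono hP1.le hγ2.le hκ1 h12 hx)
  have hy0 := hy.1.1
  rw [max_eq_right (by linarith)]
  have heq := eq_of_margin_eq_zero hy0 (hκ1.trans h12) h (margin_eq_zero_of_isGreatest hy)
  set b := y - (y * κ' - P1)
  have hyb : y * (1 - κ') = b - P1 := by ring
  have hbP : P1 < b := by nlinarith
  have hb0 : 0 < b := hP1.trans hbP
  have hbκ : b * (P1 / b) = P1 := mul_div_cancel₀ P1 hb0.ne'
  rcases le_total κ (P1 / b) with hκb | hκb
  · refine admissibleSet_subset_Iic hγ2 (by positivity) ((div_lt_one hb0).2 hbP) hbκ ?_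
      (admissibleSet_mono hP1.le hγ2.le hκ1 hκb hx)
    rw [mul_one_sub, hbκ, ← heq, hyb]
  · have : x * κ ≤ b * κ := by nlinarith
    exact le_of_mul_le_mul_right this (lt_of_lt_of_le (by positivity) hκb)

theorem gain_le_gain_of_le_mul (ha : 0 ≤ a) (hγ2 : 0 < γ2) (hx : 0 ≤ x) (hκ : 0 ≤ κ)
    (hκκ' : κ ≤ κ') (hκ' : κ' ≤ 1) (hxy : x ≤ y) (hxκ : P1 ≤ x * κ) (hyκ : P1 ≤ y * κ')
    (hmx : 0 ≤ margin P1 γ2 x κ) (hmy : margin P1 γ2 y κ' = 0) :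
    gain a x κ ≤ gain a y κ' := by
  have hy : 0 ≤ y := hx.trans hxy
  have hu : x * (1 - κ) ≤ y * (1 - κ') := by
    have := le_of_margin_nonneg hx hκ hxκ hmx
    rw [← eq_of_margin_eq_zero hy (hκ.trans hκκ') hyκ hmy] at this
    nlinarith
  have hv : x * (1 + κ) ≤ y * (1 + κ') := by nlinarith
  have hG : ∀ z c, gain a z c = z * (1 - c) * (z * (1 + c)) + a * (z * (1 - c) + z * (1 + c)) := by
    intro z c; unfold gain; ring
  rw [hG, hG]
  have hu0 : 0 ≤ x * (1 - κ) := mul_nonneg hx (by linarith)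
  have hv0 : 0 ≤ x * (1 + κ) := by positivity
  nlinarith [mul_le_mul hu hv hv0 (hu0.trans hu)]

theorem gain_le_gain_of_isGreatest (hP1 : 0 < P1) (hγ1 : 0 < γ1) (hγ1P : γ1 ≤ P1)
    (hγ : 1 + γ2 = (1 + γ1) ^ 2) (ha : 0 ≤ a) (hμ : (1 - a) * (γ1 * (1 + γ1)) ≤ P1)
    (hκ : 0 ≤ κ) (hκκ' : κ ≤ κ') (hκ' : κ' < 1)
    (hx : IsGreatest (admissibleSet P1 γ2 κ) x) (hy : IsGreatest (admissibleSet P1 γ2 κ') y) :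
    gain a x κ ≤ gain a y κ' := by
  have hγ2 : 0 < γ2 := by nlinarith
  have hx0 : (P1 - γ1) / γ1 ≤ x :=
    hx.2 (admissibleSet_mono hP1.le hγ2.le le_rfl hκ (div_mem_admissibleSet_zero hγ1 hγ1P hγ))
  have hmy := margin_eq_zero_of_isGreatest hy
  set t := max 0 (y * κ' - P1)
  by_cases hxt : x ≤ y - t
  · have hslope := fun z (hz : x ≤ z) => potential_slope_nonneg hγ1 hγ hμ (hx0.trans hz)
    have hxy := potential_add_sq_le (hslope x le_rfl) hxt
    have hty := potential_add_sq_le (hslope _ hxt) (sub_le_self y (le_max_left 0 _))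
    refine le_of_mul_le_mul_left ?_ (by positivity : (0 : ℝ) < 1 + γ2)
    rw [one_add_mul_gain a P1 γ2 x, one_add_mul_gain a P1 γ2 y, hmy]
    nlinarith [hx.1.2, sq_nonneg (y - t - x), sq_nonneg (max 0 (x * κ - P1))]
  · have hxκ : P1 < x * κ := by
      by_contra h
      exact hxt (le_sub_max_of_isGreatest hP1 hγ2 hκ hκκ' hκ' hx.1 (not_lt.1 h) hy)
    have hxy : x ≤ y := hy.2 (admissibleSet_mono hP1.le hγ2.le hκ hκκ' hx.1)
    exact gain_le_gain_of_le_mul ha hγ2 hx.1.1 hκ hκκ' hκ'.le hxy hxκ.le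
      (hxκ.le.trans (mul_le_mul hxy hκκ' hκ (hx.1.1.trans hxy))) hx.1.2 hmy

theorem sSup_preimage_mul_mul (ha : 0 < a) (s : Set ℝ) : sSup ((· * a) ⁻¹' s) * a = sSup s := by
  have : (· * a) ⁻¹' s = a⁻¹ • s := by
    ext p; rw [mem_inv_smul_set_iff₀ ha.ne', mem_preimage, smul_eq_mul, mul_comm]
  rw [this, Real.sSup_smul_of_nonneg (inv_nonneg.2 ha.le), smul_eq_mul, mul_right_comm,
    inv_mul_cancel₀ ha.ne', one_mul]

theorem half_logb_le_half_logb_iff {b c : ℝ} (hb : 0 < b) (hc : 0 < c) :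
    1 / 2 * logb 2 b ≤ 1 / 2 * logb 2 c ↔ b ≤ c := by
  rw [mul_le_mul_iff_right₀ (by norm_num), logb_le_logb one_lt_two hb hc]

theorem rate_ge_iff (hP1 : 0 ≤ P1) (hγ2 : 0 ≤ γ2) (hx : 0 ≤ x) (hκ0 : 0 ≤ κ) (hκ1 : κ ≤ 1) :
    (if x * κ < P1 then 1 / 2 * logb 2 ((x + P1 + 1) ^ 2 / rateArg x κ)
      else 1 / 2 * logb 2 (1 + 2 * P1 * (x * (1 + κ) + 1) / rateArg x κ))
        ≥ 1 / 2 * logb 2 (1 + γ2) ↔ 0 ≤ margin P1 γ2 x κ := by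
  have hD := rateArg_pos hx hκ0 hκ1
  rw [ge_iff_le]
  split_ifs with h
  · rw [half_logb_le_half_logb_iff (by positivity) (by positivity), le_div_iff₀ hD,
      margin_of_le h.le, sub_nonneg]
  · rw [half_logb_le_half_logb_iff (by positivity) (by positivity), add_le_add_iff_left,
      le_div_iff₀ hD, margin, max_eq_left (by linarith)]
    constructor <;> intro <;> linarith

end ZInterference

open ZInterference in
theorem stmt8_general (P1 a12 α Rbar γ1 γ2 : ℝ)
    (hP1 : 0 < P1) (ha12 : 0 < a12) (hα : α ∈ Set.Ioo (0:ℝ) 1)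
    (hRbar : Rbar = α * Real.logb 2 (1 + P1))
    (hγ1 : γ1 = (1 + P1) ^ α - 1) (hγ2 : γ2 = (1 + P1) ^ (2 * α) - 1)
    (R2 : ℝ → ℝ → ℝ)
    (hR2 : ∀ p κ, R2 p κ = (1 / 2) * Real.logb 2 (1 + p * (p * (1 - κ ^ 2) + 2)))
    (R1A : ℝ → ℝ → ℝ)
    (hR1A : ∀ p κ, R1A p κ = (1 / 2) * Real.logb 2
        ((p * a12 + P1 + 1) ^ 2 / (1 + p * a12 * (p * a12 * (1 - κ ^ 2) + 2))))
    (R1B : ℝ → ℝ → ℝ)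
    (hR1B : ∀ p κ, R1B p κ = (1 / 2) * Real.logb 2
        (1 + 2 * P1 * (p * a12 * (1 + κ) + 1)
            / (1 + p * a12 * (p * a12 * (1 - κ ^ 2) + 2))))
    (Ψ : ℝ → ℝ → ℝ)
    (hΨ : ∀ p κ, Ψ p κ = if p * κ * a12 < P1 then R1A p κ else R1B p κ)
    (q : ℝ → ℝ)
    (hq : ∀ κ, q κ = sSup {p : ℝ | 0 ≤ p ∧ Ψ p κ ≥ Rbar})
    (hμ : a12 ≥ 1 - P1 / (γ2 - γ1)) :
    MonotoneOn (fun κ => R2 (q κ) κ) (Set.Ico 0 1) := by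
  have hP1' : (1 : ℝ) < 1 + P1 := by linarith
  have hγ1pos : 0 < γ1 := by
    have := rpow_lt_rpow_of_exponent_lt hP1' hα.1; rw [rpow_zero] at this; linarith
  have hγ1P : γ1 < P1 := by
    have := rpow_lt_rpow_of_exponent_lt hP1' hα.2; rw [rpow_one] at this; linarith
  have hγ : 1 + γ2 = (1 + γ1) ^ 2 := by
    rw [hγ1, hγ2, mul_comm, rpow_mul (by positivity), rpow_two]; ring
  have hγ2pos : 0 < γ2 := by nlinarith
  have hRbar' : Rbar = 1 / 2 * logb 2 (1 + γ2) := by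
    rw [hRbar, hγ2, add_sub_cancel, logb_rpow_eq_mul_logb_of_pos (by positivity)]; ring
  have hμ' : (1 - a12) * (γ1 * (1 + γ1)) ≤ P1 := by
    rw [show γ2 - γ1 = γ1 * (1 + γ1) by linear_combination hγ, ge_iff_le, sub_le_iff_le_add,
      ← sub_le_iff_le_add', le_div_iff₀ (by positivity)] at hμ
    exact hμ
  have hmax : ∀ κ ∈ Ico (0 : ℝ) 1, IsGreatest (admissibleSet P1 γ2 κ) (q κ * a12) := by
    rintro κ ⟨hκ0, hκ1⟩
    have hset : {p : ℝ | 0 ≤ p ∧ Ψ p κ ≥ Rbar} = (· * a12) ⁻¹' admissibleSet P1 γ2 κ := by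
      ext p
      simp only [mem_ofPred_eq, mem_preimage, admissibleSet, mul_nonneg_iff_of_pos_right ha12]
      refine and_congr_right fun hp => ?_
      rw [hΨ, hR1A, hR1B, hRbar', mul_right_comm p κ a12]
      exact rate_ge_iff hP1.le hγ2pos.le (by positivity) hκ0 hκ1.le
    rw [hq, hset, sSup_preimage_mul_mul ha12]
    exact isGreatest_sSup_admissibleSet hP1.le hγ2pos (by nlinarith) hκ0 hκ1
  intro κ hκ κ' hκ' hκκ'
  have hgain := gain_le_gain_of_isGreatest hP1 hγ1pos hγ1P.le hγ ha12.le hμ' hκ.1 hκκ' hκ'.2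
    (hmax κ hκ) (hmax κ' hκ')
  rw [gain_mul, gain_mul, mul_le_mul_iff_right₀ (by positivity), sub_le_sub_iff_right] at hgain
  have hq0 : 0 ≤ q κ := nonneg_of_mul_nonneg_left (hmax κ hκ).1.1 ha12
  simp only [hR2]
  exact (half_logb_le_half_logb_iff (rateArg_pos hq0 hκ.1 hκ.2.le)
    ((rateArg_pos hq0 hκ.1 hκ.2.le).trans_le hgain)).2 hgain

/-- Lemma 2, first case: If `a12 ≥ μ(α) = 1 − P1/(γ2 − γ1)`, then
`κ ↦ R2(q(κ), κ)` is monotonically nondecreasing on `[0,1)`, where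
`q(κ) = sSup {p ≥ 0 : Ψ(p,κ) ≥ R̄}` is the maximum interference power tolerated
by user 1. -/
theorem stmt8 (P1 P2 a12 α Rbar γ1 γ2 : ℝ)
    (hP1 : 0 < P1) (hP2 : 0 < P2) (ha12 : 0 < a12) (hα : α ∈ Set.Ioo (0:ℝ) 1)
    (hRbar : Rbar = α * Real.logb 2 (1 + P1))
    (hγ1 : γ1 = (1 + P1) ^ α - 1) (hγ2 : γ2 = (1 + P1) ^ (2 * α) - 1)
    (R2 : ℝ → ℝ → ℝ)
    (hR2 : ∀ p κ, R2 p κ = (1 / 2) * Real.logb 2 (1 + p * (p * (1 - κ ^ 2) + 2)))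
    (R1A : ℝ → ℝ → ℝ)
    (hR1A : ∀ p κ, R1A p κ = (1 / 2) * Real.logb 2
        ((p * a12 + P1 + 1) ^ 2 / (1 + p * a12 * (p * a12 * (1 - κ ^ 2) + 2))))
    (R1B : ℝ → ℝ → ℝ)
    (hR1B : ∀ p κ, R1B p κ = (1 / 2) * Real.logb 2
        (1 + 2 * P1 * (p * a12 * (1 + κ) + 1)
            / (1 + p * a12 * (p * a12 * (1 - κ ^ 2) + 2))))
    (Ψ : ℝ → ℝ → ℝ)
    (hΨ : ∀ p κ, Ψ p κ = if p * κ * a12 < P1 then R1A p κ else R1B p κ)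
    (q : ℝ → ℝ)
    (hq : ∀ κ, q κ = sSup {p : ℝ | 0 ≤ p ∧ Ψ p κ ≥ Rbar})
    (hμ : a12 ≥ 1 - P1 / (γ2 - γ1)) :
    MonotoneOn (fun κ => R2 (q κ) κ) (Set.Ico 0 1) :=
  stmt8_general P1 a12 α Rbar γ1 γ2 hP1 ha12 hα hRbar hγ1 hγ2 R2 hR2 R1A hR1A R1B hR1B Ψ hΨ q hq hμ
end

section
/- (Lemma 2, third case.) If 0 < a12 ≤ ι(α), then R2(q(κ), κ) ≤ R2(q(0), 0) for all κ ∈ [0,1). -/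
/-!
Write `x = p a₁₂` for the interference received by user 1 and note `1 + γ₂ = (1 + γ₁)²`.
Because `2 P₁ < γ₂` (forced by `0 < a₁₂ ≤ ι`), the branch `R1B` never reaches `R̄`, so `p` is
feasible iff `κ x < P₁` and `(1 + γ₁)² ((1 + x)² - (κ x)²) ≤ (x + P₁ + 1)²`. For `κ = 0` this
says `x ≤ X₀ = (P₁ - γ₁) / γ₁`, so `q 0 = X₀ / a₁₂`. For general `κ`,
`(1 + γ₁)² (1 - κ²) x²` lies below the parabola `(x + P₁ + 1)² - (1 + γ₁)² (1 + 2x)`, whose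
smaller root is `s₁`; feasible points with `x > s₁` would exceed `P₁`, contradicting `κ x < P₁`.
On `[X₀, s₁]` the parabola lies below its chord, which gives
`(1 - κ²) x² + 2 ι (x - X₀) ≤ X₀²`; with `a₁₂ ≤ ι` this bounds `R2` by its value at
`(X₀ / a₁₂, 0)`, and the bound passes to the supremum `q κ` by continuity.
With `σ = √(γ₂ - 2 P₁)` everything is explicit: `2 P₁ = γ₁² + 2 γ₁ - σ²`,
`s₁ = (γ₁ - σ)(γ₁ - σ + 2) / 2` and `ι = (γ₁ + σ)² / (4 γ₁ (1 + γ₁))`.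
-/

lemma Continuous.map_csSup_le {α β : Type*} [ConditionallyCompleteLinearOrder α]
    [TopologicalSpace α] [OrderTopology α] [TopologicalSpace β] [Preorder β]
    [OrderClosedTopology β] {f : α → β} (hf : Continuous f) {s : Set α} (hne : s.Nonempty)
    (hbdd : BddAbove s) {b : β} (hb : ∀ x ∈ s, f x ≤ b) : f (sSup s) ≤ b :=
  closure_minimal hb (isClosed_le hf continuous_const) (csSup_mem_closure hne hbdd)

noncomputable section

namespace ZInterference

open Real Set

/-- `(1 + x)² - (κ x)²`, the determinant of the augmented covariance
`[[1 + x, κ x], [κ x, 1 + x]]`. -/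
def augDet (x κ : ℝ) : ℝ := 1 + x * (x * (1 - κ ^ 2) + 2)

/-- The rate `Ψ` of user 1 as a function of the received interference power `x = p a₁₂`. -/
def rate1 (P x κ : ℝ) : ℝ :=
  if x * κ < P then 1 / 2 * logb 2 ((x + P + 1) ^ 2 / augDet x κ)
  else 1 / 2 * logb 2 (1 + 2 * P * (x * (1 + κ) + 1) / augDet x κ)

def rate2 (x κ : ℝ) : ℝ := 1 / 2 * logb 2 (augDet x κ)

/-- With `c = 2 ^ (2 R̄)`, the maximal tolerated interference power is
`q κ = sSup (feasiblePowers P₁ a₁₂ c κ)`. -/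
def feasiblePowers (P a c κ : ℝ) : Set ℝ :=
  {p | 0 ≤ p ∧ rate1 P (p * a) κ ≥ 1 / 2 * logb 2 c}

lemma augDet_pos {x κ : ℝ} (hx : 0 ≤ x) (hκ : κ ^ 2 ≤ 1) : 0 < augDet x κ := by
  have : 0 ≤ 1 - κ ^ 2 := by linarith
  unfold augDet
  positivity

lemma augDet_zero_right (x : ℝ) : augDet x 0 = (1 + x) ^ 2 := by
  unfold augDet
  ring

lemma le_augDet {x κ : ℝ} (hx : 0 ≤ x) (hκ : κ ^ 2 ≤ 1) : x ≤ augDet x κ := by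
  have : 0 ≤ x * (x * (1 - κ ^ 2)) := mul_nonneg hx (mul_nonneg hx (by linarith))
  unfold augDet
  linarith

lemma continuous_augDet (κ : ℝ) : Continuous (augDet · κ) := by
  unfold augDet
  fun_prop

lemma two_mul_lt_augDet {P c x κ : ℝ} (hP : 0 ≤ P) (hc : 1 + 2 * P < c) (hx : 0 ≤ x)
    (hκ : κ ^ 2 ≤ 1) : 2 * P * (x * (1 + κ) + 1) < (c - 1) * augDet x κ := by
  have hκ1 : κ ≤ 1 := by nlinarith
  have hw : 0 ≤ x * x * (1 - κ ^ 2) := mul_nonneg (mul_nonneg hx hx) (by linarith)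
  calc 2 * P * (x * (1 + κ) + 1) ≤ 2 * P * (2 * x + 1) := by
        have : x * (1 + κ) ≤ 2 * x := by nlinarith
        gcongr
    _ < (c - 1) * (1 + 2 * x) := by nlinarith
    _ ≤ (c - 1) * augDet x κ := by
        have : 1 + 2 * x ≤ augDet x κ := by unfold augDet; linarith
        gcongr
        linarith

lemma le_rate1_iff {P c x κ : ℝ} (hP : 0 ≤ P) (hc : 1 + 2 * P < c) (hx : 0 ≤ x)
    (hκ : κ ^ 2 ≤ 1) :
    1 / 2 * logb 2 c ≤ rate1 P x κ ↔ x * κ < P ∧ c * augDet x κ ≤ (x + P + 1) ^ 2 := by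
  have hD := augDet_pos hx hκ
  have hc0 : 0 < c := by linarith
  unfold rate1
  split_ifs with hA
  · have hN : 0 < (x + P + 1) ^ 2 / augDet x κ := by positivity
    rw [mul_le_mul_iff_right₀ one_half_pos, logb_le_logb one_lt_two hc0 hN, le_div_iff₀ hD]
    exact ⟨fun h => ⟨hA, h⟩, And.right⟩
  · have hB := two_mul_lt_augDet hP hc hx hκ
    have hN : 0 < 1 + 2 * P * (x * (1 + κ) + 1) / augDet x κ := by
      have : 0 ≤ 1 + κ := by nlinarith
      positivity
    rw [mul_le_mul_iff_right₀ one_half_pos, logb_le_logb one_lt_two hc0 hN, iff_false_intro hA,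
      false_and, iff_false, not_le, ← lt_sub_iff_add_lt', div_lt_iff₀ hD]
    exact hB


lemma mem_feasiblePowers_iff {P a c κ p : ℝ} (hP : 0 ≤ P) (hc : 1 + 2 * P < c) (ha : 0 ≤ a)
    (hκ : κ ^ 2 ≤ 1) :
    p ∈ feasiblePowers P a c κ ↔
      0 ≤ p ∧ p * a * κ < P ∧ c * augDet (p * a) κ ≤ (p * a + P + 1) ^ 2 :=
  and_congr_right fun hp => le_rate1_iff hP hc (mul_nonneg hp ha) hκ

section Threshold

variable {g σ P x κ : ℝ}

lemma one_add_two_mul_lt (hσ : 0 < σ) (hP : 2 * P = g ^ 2 + 2 * g - σ ^ 2) :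
    1 + 2 * P < (1 + g) ^ 2 := by
  nlinarith

lemma lt_of_feasible {c : ℝ} (hP : 0 ≤ P) (hc : 1 + 2 * P < c) (hx : 0 ≤ x) (hκ : 0 ≤ κ)
    (hxκ : x * κ ≤ P) (h : c * augDet x κ ≤ (x + P + 1) ^ 2) : x < P := by
  by_contra! hPx
  have hD : (1 + x) ^ 2 - P ^ 2 ≤ augDet x κ := by
    have : (x * κ) ^ 2 ≤ P ^ 2 := pow_le_pow_left₀ (mul_nonneg hx hκ) hxκ 2
    unfold augDet
    nlinarith
  have hpos : 0 < (1 + x) ^ 2 - P ^ 2 := by nlinarith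
  have h1 : c * ((1 + x) ^ 2 - P ^ 2) ≤ (x + P + 1) ^ 2 :=
    (mul_le_mul_of_nonneg_left hD (by linarith)).trans h
  nlinarith [mul_lt_mul_of_pos_right hc hpos,
    mul_nonneg hP (mul_nonneg (by linarith : 0 ≤ 1 + x + P) (by linarith : 0 ≤ x - P))]

lemma le_of_feasible (hσ : 0 < σ) (hσg : σ < g) (hP : 2 * P = g ^ 2 + 2 * g - σ ^ 2) (hx : 0 ≤ x)
    (hκ0 : 0 ≤ κ) (hκ1 : κ ≤ 1) (hxκ : x * κ ≤ P)
    (h : (1 + g) ^ 2 * augDet x κ ≤ (x + P + 1) ^ 2) :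
    x ≤ (g - σ) * (g - σ + 2) / 2 := by
  have hxP : x < P := lt_of_feasible (by nlinarith) (one_add_two_mul_lt hσ hP) hx hκ0 hxκ h
  have hQ : (x + P + 1) ^ 2 - (1 + g) ^ 2 * (1 + 2 * x) =
      (x - (g - σ) * (g - σ + 2) / 2) * (x - (g + σ) * (g + σ + 2) / 2) := by
    obtain rfl : P = (g ^ 2 + 2 * g - σ ^ 2) / 2 := by linarith
    ring
  have hQ0 : 0 ≤ (x + P + 1) ^ 2 - (1 + g) ^ 2 * (1 + 2 * x) := by
    have : 0 ≤ (1 + g) ^ 2 * ((1 - κ ^ 2) * x ^ 2) :=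
      mul_nonneg (sq_nonneg _) (mul_nonneg (by nlinarith) (sq_nonneg x))
    unfold augDet at h
    nlinarith
  have hs2 : x < (g + σ) * (g + σ + 2) / 2 := by nlinarith
  by_contra! hs1
  nlinarith [mul_neg_of_pos_of_neg (sub_pos.2 hs1) (sub_neg.2 hs2)]

lemma sq_add_two_mul_le (hσ : 0 < σ) (hσg : σ < g) (hP : 2 * P = g ^ 2 + 2 * g - σ ^ 2)
    {a : ℝ} (ha : 0 ≤ a) (haι : a ≤ (g + σ) ^ 2 / (4 * g * (1 + g))) (hx : 0 ≤ x)
    (hκ0 : 0 ≤ κ) (hκ1 : κ ≤ 1) (hxκ : x * κ ≤ P)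
    (h : (1 + g) ^ 2 * augDet x κ ≤ (x + P + 1) ^ 2) :
    (1 - κ ^ 2) * x ^ 2 + 2 * a * x ≤ ((P - g) / g) ^ 2 + 2 * a * ((P - g) / g) := by
  have hg : 0 < g := hσ.trans hσg
  set X₀ := (P - g) / g with hX₀
  set ι := (g + σ) ^ 2 / (4 * g * (1 + g)) with hι
  rcases le_or_gt x X₀ with hle | hlt
  · have : x ^ 2 ≤ X₀ ^ 2 := pow_le_pow_left₀ hx hle 2
    nlinarith [mul_nonneg (sq_nonneg κ) (sq_nonneg x), mul_le_mul_of_nonneg_left hle ha]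
  have hs₁ := le_of_feasible hσ hσg hP hx hκ0 hκ1 hxκ h
  -- the linear part is the chord of the parabola through `X₀` and `s₁`
  have hchord : (x + P + 1) ^ 2 - (1 + g) ^ 2 * (1 + 2 * x) =
      (1 + g) ^ 2 * (X₀ ^ 2 - 2 * ι * (x - X₀)) + (x - X₀) * (x - (g - σ) * (g - σ + 2) / 2) := by
    obtain rfl : P = (g ^ 2 + 2 * g - σ ^ 2) / 2 := by linarith
    rw [hX₀, hι]
    field_simp
    ring
  have hgap : (x - X₀) * (x - (g - σ) * (g - σ + 2) / 2) ≤ 0 :=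
    mul_nonpos_of_nonneg_of_nonpos (by linarith) (by linarith)
  have hι' : (1 - κ ^ 2) * x ^ 2 + 2 * ι * (x - X₀) ≤ X₀ ^ 2 := by
    unfold augDet at h
    nlinarith [sq_nonneg (1 + g)]
  nlinarith [mul_le_mul_of_nonneg_right haι (by linarith : 0 ≤ x - X₀)]

lemma sub_sq_div_eq_add_sq_div (hσ : 0 < σ) (hσg : σ < g)
    (hP : 2 * P = g ^ 2 + 2 * g - σ ^ 2) :
    (P - g) ^ 2 / ((g ^ 2 + 2 * g - g) * (σ - g) ^ 2) = (g + σ) ^ 2 / (4 * g * (1 + g)) := by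
  have hg : 0 < g := hσ.trans hσg
  obtain rfl : P = (g ^ 2 + 2 * g - σ ^ 2) / 2 := by linarith
  have hden : (g ^ 2 + 2 * g - g) * (σ - g) ^ 2 ≠ 0 :=
    mul_ne_zero (by nlinarith) (pow_ne_zero 2 (by linarith))
  rw [div_eq_div_iff hden (by positivity)]
  ring

variable {a : ℝ}

lemma feasiblePowers_zero (hσ : 0 < σ) (hσg : σ < g) (hP : 2 * P = g ^ 2 + 2 * g - σ ^ 2)
    (ha : 0 < a) : feasiblePowers P a ((1 + g) ^ 2) 0 = Icc 0 ((P - g) / (g * a)) := by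
  have hg : 0 < g := hσ.trans hσg
  ext p
  rw [mem_feasiblePowers_iff (by nlinarith) (one_add_two_mul_lt hσ hP) ha.le (by norm_num),
    mem_Icc]
  refine and_congr_right fun hp => ?_
  have hx : 0 ≤ p * a := mul_nonneg hp ha.le
  rw [mul_zero, augDet_zero_right, ← mul_pow,
    pow_le_pow_iff_left₀ (by positivity) (by nlinarith) two_ne_zero, le_div_iff₀ (by positivity)]
  constructor
  · rintro ⟨-, h⟩
    linarith
  · intro h
    exact ⟨by nlinarith, by linarith⟩

lemma zero_mem_feasiblePowers (hσ : 0 < σ) (hσg : σ < g)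
    (hP : 2 * P = g ^ 2 + 2 * g - σ ^ 2) (ha : 0 ≤ a) (hκ : κ ^ 2 ≤ 1) :
    0 ∈ feasiblePowers P a ((1 + g) ^ 2) κ := by
  have hg : 0 < g := hσ.trans hσg
  rw [mem_feasiblePowers_iff (by nlinarith) (one_add_two_mul_lt hσ hP) ha hκ]
  simp only [zero_mul, augDet, mul_one, zero_add, add_zero]
  have : g < P := by nlinarith
  exact ⟨le_rfl, by linarith, by nlinarith⟩

lemma augDet_le_of_mem_feasiblePowers (hσ : 0 < σ) (hσg : σ < g)
    (hP : 2 * P = g ^ 2 + 2 * g - σ ^ 2) (ha : 0 < a)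
    (haι : a ≤ (g + σ) ^ 2 / (4 * g * (1 + g))) (hκ0 : 0 ≤ κ) (hκ1 : κ ≤ 1) {p : ℝ}
    (hp : p ∈ feasiblePowers P a ((1 + g) ^ 2) κ) :
    augDet p κ ≤ augDet ((P - g) / (g * a)) 0 := by
  have hg : 0 < g := hσ.trans hσg
  obtain ⟨hp0, hpκ, hfeas⟩ := (mem_feasiblePowers_iff (by nlinarith)
    (one_add_two_mul_lt hσ hP) ha.le (by nlinarith)).1 hp
  have hsq := sq_add_two_mul_le hσ hσg hP ha.le haι (mul_nonneg hp0 ha.le) hκ0 hκ1 hpκ.le hfeas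
  have hrescale (y κ : ℝ) :
      augDet y κ = 1 + ((1 - κ ^ 2) * (y * a) ^ 2 + 2 * a * (y * a)) / a ^ 2 := by
    unfold augDet
    field_simp
  rw [hrescale, hrescale, show (P - g) / (g * a) * a = (P - g) / g by field_simp]
  gcongr 1 + ?_ / _
  simpa using hsq

end Threshold

theorem rate2_sSup_feasiblePowers_le {g σ P a κ : ℝ} (hσ : 0 < σ) (hσg : σ < g)
    (hP : 2 * P = g ^ 2 + 2 * g - σ ^ 2) (ha : 0 < a)
    (haι : a ≤ (g + σ) ^ 2 / (4 * g * (1 + g))) (hκ0 : 0 ≤ κ) (hκ1 : κ ≤ 1) :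
    rate2 (sSup (feasiblePowers P a ((1 + g) ^ 2) κ)) κ ≤
      rate2 (sSup (feasiblePowers P a ((1 + g) ^ 2) 0)) 0 := by
  have hg : 0 < g := hσ.trans hσg
  have hκ : κ ^ 2 ≤ 1 := by nlinarith
  set S := feasiblePowers P a ((1 + g) ^ 2) κ
  have h0 : 0 ∈ S := zero_mem_feasiblePowers hσ hσg hP ha.le hκ
  have hbound : ∀ p ∈ S, augDet p κ ≤ augDet ((P - g) / (g * a)) 0 := fun p hp =>
    augDet_le_of_mem_feasiblePowers hσ hσg hP ha haι hκ0 hκ1 hp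
  have hbdd : BddAbove S := ⟨_, fun p hp => (le_augDet hp.1 hκ).trans (hbound p hp)⟩
  rw [feasiblePowers_zero hσ hσg hP ha, csSup_Icc (div_nonneg (by nlinarith) (by positivity))]
  exact mul_le_mul_of_nonneg_left (logb_le_logb_of_le one_lt_two
    (augDet_pos (le_csSup hbdd h0) hκ) ((continuous_augDet κ).map_csSup_le ⟨0, h0⟩ hbdd hbound))
    one_half_pos.le

end ZInterference

end

open Real ZInterference

theorem stmt10_general (P1 a12 α Rbar γ1 γ2 ι : ℝ)
    (hP1 : 0 < P1) (ha12 : 0 < a12) (hα : α ∈ Set.Ioo (0:ℝ) 1)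
    (hRbar : Rbar = α * Real.logb 2 (1 + P1))
    (hγ1 : γ1 = (1 + P1) ^ α - 1) (hγ2 : γ2 = (1 + P1) ^ (2 * α) - 1)
    (R2 : ℝ → ℝ → ℝ)
    (hR2 : ∀ p κ, R2 p κ = (1 / 2) * Real.logb 2 (1 + p * (p * (1 - κ ^ 2) + 2)))
    (R1A : ℝ → ℝ → ℝ)
    (hR1A : ∀ p κ, R1A p κ = (1 / 2) * Real.logb 2
        ((p * a12 + P1 + 1) ^ 2 / (1 + p * a12 * (p * a12 * (1 - κ ^ 2) + 2))))
    (R1B : ℝ → ℝ → ℝ)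
    (hR1B : ∀ p κ, R1B p κ = (1 / 2) * Real.logb 2
        (1 + 2 * P1 * (p * a12 * (1 + κ) + 1)
            / (1 + p * a12 * (p * a12 * (1 - κ ^ 2) + 2))))
    (Ψ : ℝ → ℝ → ℝ)
    (hΨ : ∀ p κ, Ψ p κ = if p * κ * a12 < P1 then R1A p κ else R1B p κ)
    (q : ℝ → ℝ)
    (hq : ∀ κ, q κ = sSup {p : ℝ | 0 ≤ p ∧ Ψ p κ ≥ Rbar})
    (hι : ι = if 2 * P1 < γ2 then
        (P1 - γ1) ^ 2 / ((γ2 - γ1) * (Real.sqrt (γ2 - 2 * P1) - γ1) ^ 2) else 0)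
    (ha : a12 ≤ ι) :
    ∀ κ ∈ Set.Ico (0:ℝ) 1, R2 (q κ) κ ≤ R2 (q 0) 0 := by
  obtain ⟨hα0, hα1⟩ := hα
  have h1P : 1 < 1 + P1 := by linarith
  have hγ1pos : 0 < γ1 := by linarith [one_lt_rpow h1P hα0]
  have hγ1P : γ1 < P1 := by linarith [rpow_lt_self_of_one_lt h1P hα1]
  have hγ2' : γ2 = γ1 ^ 2 + 2 * γ1 := by
    rw [hγ2, hγ1, mul_comm, rpow_mul (by linarith), rpow_two]
    ring
  have hRbar' : Rbar = 1 / 2 * logb 2 ((1 + γ1) ^ 2) := by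
    rw [hRbar, logb_pow, hγ1, add_sub_cancel, logb_rpow_eq_mul_logb_of_pos (by linarith)]
    ring
  have h2P : 2 * P1 < γ2 := by
    by_contra h
    rw [hι, if_neg h] at ha
    linarith
  set σ := √(γ2 - 2 * P1)
  have hσ2 : σ ^ 2 = γ2 - 2 * P1 := sq_sqrt (by linarith)
  have hσ : 0 < σ := sqrt_pos.2 (by linarith)
  have hσg : σ < γ1 := by nlinarith
  have hP : 2 * P1 = γ1 ^ 2 + 2 * γ1 - σ ^ 2 := by linarith
  rw [hι, if_pos h2P, hγ2', sub_sq_div_eq_add_sq_div hσ hσg hP] at ha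
  have hΨ' : Ψ = fun p κ => rate1 P1 (p * a12) κ := by
    funext p κ
    rw [hΨ, hR1A, hR1B, rate1, augDet, mul_right_comm]
  have hq' (κ : ℝ) : q κ = sSup (feasiblePowers P1 a12 ((1 + γ1) ^ 2) κ) := by
    rw [hq, hΨ', hRbar']
    rfl
  have hR2' : R2 = rate2 := by
    funext p κ
    rw [hR2, rate2, augDet]
  rintro κ ⟨hκ0, hκ1⟩
  rw [hR2', hq', hq']
  exact rate2_sSup_feasiblePowers_le hσ hσg hP ha12 ha hκ0 hκ1.le

/-- Lemma 2, third case: If `0 < a12 ≤ ι(α)`, then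
`R2(q(κ), κ) ≤ R2(q(0), 0)` for all `κ ∈ [0,1)`. -/
theorem stmt10 (P1 P2 a12 α Rbar γ1 γ2 ι : ℝ)
    (hP1 : 0 < P1) (hP2 : 0 < P2) (ha12 : 0 < a12) (hα : α ∈ Set.Ioo (0:ℝ) 1)
    (hRbar : Rbar = α * Real.logb 2 (1 + P1))
    (hγ1 : γ1 = (1 + P1) ^ α - 1) (hγ2 : γ2 = (1 + P1) ^ (2 * α) - 1)
    (R2 : ℝ → ℝ → ℝ)
    (hR2 : ∀ p κ, R2 p κ = (1 / 2) * Real.logb 2 (1 + p * (p * (1 - κ ^ 2) + 2)))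
    (R1A : ℝ → ℝ → ℝ)
    (hR1A : ∀ p κ, R1A p κ = (1 / 2) * Real.logb 2
        ((p * a12 + P1 + 1) ^ 2 / (1 + p * a12 * (p * a12 * (1 - κ ^ 2) + 2))))
    (R1B : ℝ → ℝ → ℝ)
    (hR1B : ∀ p κ, R1B p κ = (1 / 2) * Real.logb 2
        (1 + 2 * P1 * (p * a12 * (1 + κ) + 1)
            / (1 + p * a12 * (p * a12 * (1 - κ ^ 2) + 2))))
    (Ψ : ℝ → ℝ → ℝ)
    (hΨ : ∀ p κ, Ψ p κ = if p * κ * a12 < P1 then R1A p κ else R1B p κ)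
    (q : ℝ → ℝ)
    (hq : ∀ κ, q κ = sSup {p : ℝ | 0 ≤ p ∧ Ψ p κ ≥ Rbar})
    (hι : ι = if 2 * P1 < γ2 then
        (P1 - γ1) ^ 2 / ((γ2 - γ1) * (Real.sqrt (γ2 - 2 * P1) - γ1) ^ 2) else 0)
    (ha : a12 ≤ ι) :
    ∀ κ ∈ Set.Ico (0:ℝ) 1, R2 (q κ) κ ≤ R2 (q 0) 0 :=
  stmt10_general P1 a12 α Rbar γ1 γ2 ι hP1 ha12 hα hRbar hγ1 hγ2 R2 hR2 R1A hR1A R1B hR1B Ψ hΨ q hq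
    hι ha
end

section
/- Assume 2·P1 < γ2. Then R2(qA(1), 1) > R2(qA(0), 0) if and only if a12 > (P1 − γ1)² / [(γ2 − γ1)·(√(γ2 − 2·P1) − γ1)²], where qA(1) = (1/a12)·[γ2 − P1 − √((γ2+1)·(γ2 − 2·P1))] and qA(0) = (1/a12)·(P1/γ1 − 1). -/
/-!
With `g = (1 + P1) ^ α` one has `γ1 = g - 1 ∈ (0, P1)` and `γ2 + 1 = g ^ 2`, so every square root
in `qA 0` and `qA 1` reduces to `(γ1 + 1) * t` with `t = √(γ2 - 2 P1)`. Since `R2 (p, 1)` is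
`½ log₂ (1 + 2p)` and `R2 (q, 0)` is `½ log₂ ((1 + q) ^ 2)`, the rate comparison becomes
`(1 + qA 0) ^ 2 < 1 + 2 qA 1`, and after clearing denominators the difference of the two sides is
`(a12 (γ2 - γ1) (t - γ1) ^ 2 - (P1 - γ1) ^ 2) / (a12 γ1) ^ 2`.
-/

open Real Set

noncomputable def userTwoRate (p κ : ℝ) : ℝ :=
  (1 / 2) * logb 2 (1 + p * (p * (1 - κ ^ 2) + 2))

noncomputable def powerA (P γ2 a κ : ℝ) : ℝ :=
  ((P - γ2) + √((γ2 + 1) * (P ^ 2 * (1 - κ ^ 2) + (γ2 - 2 * P) * κ ^ 2)))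
    / (a * ((γ2 + 1) * (1 - κ ^ 2) - 1))

lemma rpow_sub_one_mem_Ioo {P α : ℝ} (hP : 0 < P) (hα : α ∈ Ioo (0 : ℝ) 1) :
    (1 + P) ^ α - 1 ∈ Ioo 0 P := by
  have hb : 1 < 1 + P := by linarith
  have hlt : (1 + P) ^ α < (1 + P) ^ (1 : ℝ) := rpow_lt_rpow_of_exponent_lt hb hα.2
  rw [rpow_one] at hlt
  exact ⟨sub_pos.mpr (one_lt_rpow hb hα.1), by linarith⟩

lemma rpow_two_mul_sub_one {x : ℝ} (hx : 0 ≤ x) (α : ℝ) :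
    x ^ (2 * α) - 1 = (x ^ α - 1) ^ 2 + 2 * (x ^ α - 1) := by
  rw [mul_comm, rpow_mul hx, rpow_two]
  ring

lemma sqrt_sq_add_two_mul_add_one_mul {γ : ℝ} (hγ : 0 ≤ γ + 1) (x : ℝ) :
    √((γ ^ 2 + 2 * γ + 1) * x) = (γ + 1) * √x := by
  rw [show γ ^ 2 + 2 * γ + 1 = (γ + 1) * (γ + 1) by ring, sqrt_mul (by positivity),
    sqrt_mul_self hγ]

lemma userTwoRate_zero_lt_userTwoRate_one_iff {p q : ℝ} (hp : 0 < 1 + 2 * p) (hq : 0 < 1 + q) :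
    userTwoRate q 0 < userTwoRate p 1 ↔ (1 + q) ^ 2 < 1 + 2 * p := by
  have h1 : 1 + p * (p * (1 - 1 ^ 2) + 2) = 1 + 2 * p := by ring
  have h0 : 1 + q * (q * (1 - 0 ^ 2) + 2) = (1 + q) ^ 2 := by ring
  rw [userTwoRate, userTwoRate, h1, h0, mul_lt_mul_iff_right₀ (by norm_num),
    logb_lt_logb_iff one_lt_two (by positivity) hp]

lemma powerA_one (P γ2 a : ℝ) :
    powerA P γ2 a 1 = (1 / a) * (γ2 - P - √((γ2 + 1) * (γ2 - 2 * P))) := by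
  rw [powerA]
  ring_nf

lemma powerA_zero {P γ a : ℝ} (hP : 0 ≤ P) (hγ : 0 < γ) (ha : a ≠ 0) :
    powerA P (γ ^ 2 + 2 * γ) a 0 = (1 / a) * (P / γ - 1) := by
  rw [powerA, show P ^ 2 * (1 - 0 ^ 2) + (γ ^ 2 + 2 * γ - 2 * P) * 0 ^ 2 = P * P by ring,
    sqrt_sq_add_two_mul_add_one_mul (by linarith), sqrt_mul_self hP]
  field_simp
  ring

section

variable {P γ a t : ℝ}

lemma add_one_mul_lt_of_sq_eq (hγ : 0 < γ) (hγP : γ < P)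
    (ht : t ^ 2 = γ ^ 2 + 2 * γ - 2 * P) : (γ + 1) * t < γ ^ 2 + 2 * γ - P := by
  have hsq : ((γ + 1) * t) ^ 2 < (γ ^ 2 + 2 * γ - P) ^ 2 := by
    rw [mul_pow, ht]
    nlinarith
  exact lt_of_pow_lt_pow_left₀ 2 (by nlinarith) hsq

lemma sq_one_add_lt_one_add_two_mul_iff (ha : 0 < a) (hγ : 0 < γ) (hγP : γ < P)
    (ht : t ^ 2 = γ ^ 2 + 2 * γ - 2 * P) :
    (1 + (1 / a) * (P / γ - 1)) ^ 2 < 1 + 2 * ((1 / a) * (γ ^ 2 + 2 * γ - P - (γ + 1) * t))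
      ↔ (P - γ) ^ 2 / ((γ ^ 2 + 2 * γ - γ) * (t - γ) ^ 2) < a := by
  have htγ : t < γ := by nlinarith
  have hD : 0 < (γ ^ 2 + 2 * γ - γ) * (t - γ) ^ 2 :=
    mul_pos (by nlinarith) (sq_pos_of_ne_zero (sub_ne_zero.mpr htγ.ne))
  have key : (a * γ) ^ 2 * ((1 + 2 * ((1 / a) * (γ ^ 2 + 2 * γ - P - (γ + 1) * t)))
      - (1 + (1 / a) * (P / γ - 1)) ^ 2)
      = a * ((γ ^ 2 + 2 * γ - γ) * (t - γ) ^ 2) - (P - γ) ^ 2 := by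
    field_simp
    linear_combination (-(a * γ ^ 2 + a * γ)) * ht
  rw [div_lt_iff₀ hD, ← sub_pos, ← sub_pos (a := a * _), ← key,
    mul_pos_iff_of_pos_left (by positivity)]

end

theorem stmt11_general (P1 a12 α γ1 γ2 : ℝ)
    (hP1 : 0 < P1) (ha12 : 0 < a12) (hα : α ∈ Set.Ioo (0:ℝ) 1)
    (hγ1 : γ1 = (1 + P1) ^ α - 1) (hγ2 : γ2 = (1 + P1) ^ (2 * α) - 1)
    (h2P1 : 2 * P1 < γ2)
    (R2 : ℝ → ℝ → ℝ)
    (hR2 : ∀ p κ, R2 p κ = (1 / 2) * Real.logb 2 (1 + p * (p * (1 - κ ^ 2) + 2)))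
    (qA : ℝ → ℝ)
    (hqA : ∀ κ, qA κ = ((P1 - γ2)
        + Real.sqrt ((γ2 + 1) * (P1 ^ 2 * (1 - κ ^ 2) + (γ2 - 2 * P1) * κ ^ 2)))
        / (a12 * ((γ2 + 1) * (1 - κ ^ 2) - 1))) :
    qA 1 = (1 / a12) * (γ2 - P1 - Real.sqrt ((γ2 + 1) * (γ2 - 2 * P1)))
    ∧ qA 0 = (1 / a12) * (P1 / γ1 - 1)
    ∧ (R2 (qA 1) 1 > R2 (qA 0) 0
        ↔ a12 > (P1 - γ1) ^ 2
            / ((γ2 - γ1) * (Real.sqrt (γ2 - 2 * P1) - γ1) ^ 2)) := by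
  obtain ⟨hγ1pos, hγ1P1⟩ : γ1 ∈ Ioo 0 P1 := hγ1 ▸ rpow_sub_one_mem_Ioo hP1 hα
  obtain rfl : γ2 = γ1 ^ 2 + 2 * γ1 := by rw [hγ2, hγ1, rpow_two_mul_sub_one (by linarith)]
  obtain rfl : R2 = userTwoRate := funext₂ hR2
  obtain rfl : qA = powerA P1 (γ1 ^ 2 + 2 * γ1) a12 := funext hqA
  have hq0 := powerA_zero hP1.le hγ1pos ha12.ne'
  refine ⟨powerA_one .., hq0, ?_⟩
  set t := √(γ1 ^ 2 + 2 * γ1 - 2 * P1)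
  have ht : t ^ 2 = γ1 ^ 2 + 2 * γ1 - 2 * P1 := sq_sqrt (by linarith)
  have hq1 : powerA P1 (γ1 ^ 2 + 2 * γ1) a12 1
      = (1 / a12) * (γ1 ^ 2 + 2 * γ1 - P1 - (γ1 + 1) * t) := by
    rw [powerA_one, sqrt_sq_add_two_mul_add_one_mul (by linarith)]
  have hq1pos : 0 < (1 / a12) * (γ1 ^ 2 + 2 * γ1 - P1 - (γ1 + 1) * t) :=
    mul_pos (by positivity) (sub_pos.mpr (add_one_mul_lt_of_sq_eq hγ1pos hγ1P1 ht))
  have hq0pos : 0 < (1 / a12) * (P1 / γ1 - 1) :=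
    mul_pos (by positivity) (sub_pos.mpr ((one_lt_div hγ1pos).mpr hγ1P1))
  rw [gt_iff_lt, gt_iff_lt, hq1, hq0,
    userTwoRate_zero_lt_userTwoRate_one_iff (by linarith) (by linarith)]
  exact sq_one_add_lt_one_add_two_mul_iff ha12 hγ1pos hγ1P1 ht

/-- Assume `2·P1 < γ2`. Then `R2(qA(1), 1) > R2(qA(0), 0)` iff
`a12 > (P1 − γ1)² / [(γ2 − γ1)·(√(γ2 − 2·P1) − γ1)²]`, where
`qA(1) = (1/a12)·(γ2 − P1 − √((γ2+1)·(γ2 − 2·P1)))` and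
`qA(0) = (1/a12)·(P1/γ1 − 1)`. -/
theorem stmt11 (P1 P2 a12 α Rbar γ1 γ2 : ℝ)
    (hP1 : 0 < P1) (hP2 : 0 < P2) (ha12 : 0 < a12) (hα : α ∈ Set.Ioo (0:ℝ) 1)
    (hRbar : Rbar = α * Real.logb 2 (1 + P1))
    (hγ1 : γ1 = (1 + P1) ^ α - 1) (hγ2 : γ2 = (1 + P1) ^ (2 * α) - 1)
    (h2P1 : 2 * P1 < γ2)
    (R2 : ℝ → ℝ → ℝ)
    (hR2 : ∀ p κ, R2 p κ = (1 / 2) * Real.logb 2 (1 + p * (p * (1 - κ ^ 2) + 2)))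
    (qA : ℝ → ℝ)
    (hqA : ∀ κ, qA κ = ((P1 - γ2)
        + Real.sqrt ((γ2 + 1) * (P1 ^ 2 * (1 - κ ^ 2) + (γ2 - 2 * P1) * κ ^ 2)))
        / (a12 * ((γ2 + 1) * (1 - κ ^ 2) - 1))) :
    qA 1 = (1 / a12) * (γ2 - P1 - Real.sqrt ((γ2 + 1) * (γ2 - 2 * P1)))
    ∧ qA 0 = (1 / a12) * (P1 / γ1 - 1)
    ∧ (R2 (qA 1) 1 > R2 (qA 0) 0
        ↔ a12 > (P1 - γ1) ^ 2
            / ((γ2 - γ1) * (Real.sqrt (γ2 - 2 * P1) - γ1) ^ 2)) :=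
  stmt11_general P1 a12 α γ1 γ2 hP1 ha12 hα hγ1 hγ2 h2P1 R2 hR2 qA hqA
end

section
/- Let q0 = (1/a12)·(P1/γ1 − 1) ≥ 0. Then for every κm ∈ [0,1], the inequality R2(P2, κm) ≥ R2(q0, 0) holds if and only if κm² ≤ 1 − (1/P2²)·(1 + q0)² + (2·P2 + 1)/P2². -/
/-!
As `logb 2` is strictly increasing, comparing the rates compares their arguments
`1 + p (p (1 - κ²) + 2) = (1 + p)² - (p κ)²`; at `κ = 0` this is `(1 + q0)²`, and the claimed bound
on `κm²` is the same comparison divided by `P2²`.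
-/

open Real

lemma half_mul_logb_two_le_iff {x y : ℝ} (hx : 0 < x) (hy : 0 < y) :
    1 / 2 * logb 2 x ≤ 1 / 2 * logb 2 y ↔ x ≤ y := by
  rw [mul_le_mul_iff_right₀ (by norm_num), logb_le_logb (by norm_num) hx hy]

lemma one_add_mul_mul_one_sub_sq_add_two (p κ : ℝ) :
    1 + p * (p * (1 - κ ^ 2) + 2) = (1 + p) ^ 2 - (p * κ) ^ 2 := by
  ring

lemma one_add_mul_mul_one_sub_sq_add_two_pos {p κ : ℝ} (hp : 0 ≤ p) (hκ : κ ^ 2 ≤ 1) :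
    0 < 1 + p * (p * (1 - κ ^ 2) + 2) := by
  have : 0 ≤ p * (p * (1 - κ ^ 2) + 2) := by
    have : 0 ≤ 1 - κ ^ 2 := by linarith
    positivity
  linarith

lemma sq_le_one_sub_div_add_div_iff {p κ c : ℝ} (hp : 0 < p) :
    κ ^ 2 ≤ 1 - 1 / p ^ 2 * c + (2 * p + 1) / p ^ 2 ↔
      c ≤ 1 + p * (p * (1 - κ ^ 2) + 2) := by
  have hp2 : 0 < p ^ 2 := by positivity
  rw [show 1 - 1 / p ^ 2 * c + (2 * p + 1) / p ^ 2 = ((1 + p) ^ 2 - c) / p ^ 2 by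
      field_simp; ring,
    le_div_iff₀ hp2, one_add_mul_mul_one_sub_sq_add_two]
  constructor <;> intro h <;> linarith

theorem stmt13_general (P2 : ℝ)
    (hP2 : 0 < P2)
    (R2 : ℝ → ℝ → ℝ)
    (hR2 : ∀ p κ, R2 p κ = (1 / 2) * Real.logb 2 (1 + p * (p * (1 - κ ^ 2) + 2)))
    (q0 : ℝ) (hq0nn : 0 ≤ q0) :
    ∀ κm ∈ Set.Icc (0:ℝ) 1,
      (R2 P2 κm ≥ R2 q0 0
        ↔ κm ^ 2 ≤ 1 - (1 / P2 ^ 2) * (1 + q0) ^ 2 + (2 * P2 + 1) / P2 ^ 2) := by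
  rintro κm ⟨hκ0, hκ1⟩
  have hκ : κm ^ 2 ≤ 1 := pow_le_one₀ hκ0 hκ1
  rw [ge_iff_le, hR2, hR2,
    half_mul_logb_two_le_iff (one_add_mul_mul_one_sub_sq_add_two_pos hq0nn (by norm_num))
      (one_add_mul_mul_one_sub_sq_add_two_pos hP2.le hκ),
    sq_le_one_sub_div_add_div_iff hP2, one_add_mul_mul_one_sub_sq_add_two q0 0,
    mul_zero, zero_pow two_ne_zero, sub_zero]

/-- Let `q0 = (1/a12)·(P1/γ1 − 1) ≥ 0`. Then for every
`κm ∈ [0,1]`, `R2(P2, κm) ≥ R2(q0, 0)` iff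
`κm² ≤ 1 − (1/P2²)·(1 + q0)² + (2·P2 + 1)/P2²`. -/
theorem stmt13 (P1 P2 a12 α Rbar γ1 γ2 : ℝ)
    (hP1 : 0 < P1) (hP2 : 0 < P2) (ha12 : 0 < a12) (hα : α ∈ Set.Ioo (0:ℝ) 1)
    (hRbar : Rbar = α * Real.logb 2 (1 + P1))
    (hγ1 : γ1 = (1 + P1) ^ α - 1) (hγ2 : γ2 = (1 + P1) ^ (2 * α) - 1)
    (R2 : ℝ → ℝ → ℝ)
    (hR2 : ∀ p κ, R2 p κ = (1 / 2) * Real.logb 2 (1 + p * (p * (1 - κ ^ 2) + 2)))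
    (q0 : ℝ) (hq0 : q0 = (1 / a12) * (P1 / γ1 - 1)) (hq0nn : 0 ≤ q0) :
    ∀ κm ∈ Set.Icc (0:ℝ) 1,
      (R2 P2 κm ≥ R2 q0 0
        ↔ κm ^ 2 ≤ 1 - (1 / P2 ^ 2) * (1 + q0) ^ 2 + (2 * P2 + 1) / P2 ^ 2) :=
  stmt13_general P2 hP2 R2 hR2 q0 hq0nn
end

section
/- Let α0 ∈ (0,1) be the unique value with (1+P1)^{2·α0} = 1 + 2·P1 (so that γ2(α0) = 2·P1). Then the one-sided limit of ι(α) as α → α0 from above equals (1/4)·(1 − 1/√(1 + 2·P1)), which also equals (1/4)·γ1(α0)/(γ1(α0) + 1) with γ1(α0) = √(1 + 2·P1) − 1. -/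
/-!
At `α0` the base point satisfies `(1 + P1) ^ α0 = √(1 + 2 * P1) =: s`, so `γ1(α0) = s - 1` and
`γ2(α0) = 2 * P1`. For `α > α0` the exponential `γ2` exceeds `2 * P1`, so `ι` is given by its
closed-form branch, whose only singular ingredient `√(γ2 - 2 * P1)` is continuous and vanishes at
`α0`. The branch is therefore continuous at `α0`, and with `2 * P1 = s ^ 2 - 1` its value there is
`(s - 1) ^ 4 / 4 / (s * (s - 1) ^ 3) = (1 - 1 / s) / 4`.
-/

open Filter Topology Real

lemma rpow_eq_sqrt_rpow_two_mul {b : ℝ} (hb : 0 ≤ b) (a : ℝ) : b ^ a = √(b ^ (2 * a)) := by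
  rw [mul_comm, rpow_mul hb, rpow_two, sqrt_sq (rpow_nonneg hb a)]

/-- The branch of `ι` taken when `2 * P1 < γ2`, as a function of the values `g1 = γ1(α)` and
`g2 = γ2(α)`. -/
noncomputable def iotaBranch (P1 g1 g2 : ℝ) : ℝ :=
  (P1 - g1) ^ 2 / ((g2 - g1) * (√(g2 - 2 * P1) - g1) ^ 2)

lemma ContinuousAt.iotaBranch {P1 x : ℝ} {f g : ℝ → ℝ} (hf : ContinuousAt f x)
    (hg : ContinuousAt g x) (hden : (g x - f x) * (√(g x - 2 * P1) - f x) ^ 2 ≠ 0) :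
    ContinuousAt (fun α => iotaBranch P1 (f α) (g α)) x :=
  ((continuousAt_const.sub hf).pow 2).div
    ((hg.sub hf).mul (((hg.sub continuousAt_const).sqrt.sub hf).pow 2)) hden

section Threshold

variable {P1 : ℝ} (hP1 : 0 < P1)
include hP1

lemma one_lt_sqrt_one_add_two_mul : 1 < √(1 + 2 * P1) := by
  rw [lt_sqrt zero_le_one]
  linarith

lemma iotaBranch_denom_at_threshold :
    (2 * P1 - (√(1 + 2 * P1) - 1)) * (√(2 * P1 - 2 * P1) - (√(1 + 2 * P1) - 1)) ^ 2
      = √(1 + 2 * P1) * (√(1 + 2 * P1) - 1) ^ 3 := by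
  have hs2 : √(1 + 2 * P1) ^ 2 = 1 + 2 * P1 := sq_sqrt (by linarith)
  rw [sub_self, sqrt_zero]
  linear_combination -(√(1 + 2 * P1) - 1) ^ 2 * hs2

lemma iotaBranch_denom_at_threshold_ne_zero :
    (2 * P1 - (√(1 + 2 * P1) - 1)) * (√(2 * P1 - 2 * P1) - (√(1 + 2 * P1) - 1)) ^ 2 ≠ 0 := by
  have hs1 := one_lt_sqrt_one_add_two_mul hP1
  rw [iotaBranch_denom_at_threshold hP1]
  exact (mul_pos (by linarith) (pow_pos (by linarith) 3)).ne'

lemma iotaBranch_at_threshold :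
    iotaBranch P1 (√(1 + 2 * P1) - 1) (2 * P1) = 1 / 4 * (1 - 1 / √(1 + 2 * P1)) := by
  have hs1 := one_lt_sqrt_one_add_two_mul hP1
  have hs2 : √(1 + 2 * P1) ^ 2 = 1 + 2 * P1 := sq_sqrt (by linarith)
  have hnum : (P1 - (√(1 + 2 * P1) - 1)) ^ 2 = (√(1 + 2 * P1) - 1) ^ 4 / 4 := by
    have : P1 - (√(1 + 2 * P1) - 1) = (√(1 + 2 * P1) - 1) ^ 2 / 2 := by
      linear_combination -hs2 / 2
    rw [this]
    ring
  have hs0 : √(1 + 2 * P1) ≠ 0 := by linarith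
  have hs10 : √(1 + 2 * P1) - 1 ≠ 0 := by linarith
  rw [iotaBranch, iotaBranch_denom_at_threshold hP1, hnum]
  field_simp

end Threshold

theorem stmt18_general (P1 : ℝ) (hP1 : 0 < P1)
    (γ1f γ2f ιf : ℝ → ℝ)
    (hγ1 : ∀ α, γ1f α = (1 + P1) ^ α - 1)
    (hγ2 : ∀ α, γ2f α = (1 + P1) ^ (2 * α) - 1)
    (hι : ∀ α, ιf α = if 2 * P1 < γ2f α then
        (P1 - γ1f α) ^ 2
          / ((γ2f α - γ1f α) * (Real.sqrt (γ2f α - 2 * P1) - γ1f α) ^ 2)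
        else 0)
    (α0 : ℝ)
    (hα0eq : (1 + P1) ^ (2 * α0) = 1 + 2 * P1) :
    Filter.Tendsto ιf (nhdsWithin α0 (Set.Ioi α0))
      (nhds ((1 / 4) * (1 - 1 / Real.sqrt (1 + 2 * P1))))
    ∧ γ1f α0 = Real.sqrt (1 + 2 * P1) - 1
    ∧ (1 / 4) * (1 - 1 / Real.sqrt (1 + 2 * P1))
        = (1 / 4) * (γ1f α0 / (γ1f α0 + 1)) := by
  have hbase : 1 < 1 + P1 := by linarith
  have hγ1α0 : γ1f α0 = √(1 + 2 * P1) - 1 := by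
    rw [hγ1, rpow_eq_sqrt_rpow_two_mul (by linarith), hα0eq]
  have hγ2α0 : γ2f α0 = 2 * P1 := by rw [hγ2, hα0eq]; ring
  have hbranch : ιf =ᶠ[𝓝[>] α0] fun α => iotaBranch P1 (γ1f α) (γ2f α) := by
    filter_upwards [self_mem_nhdsWithin] with α (hα : α0 < α)
    have : (1 + P1) ^ (2 * α0) < (1 + P1) ^ (2 * α) :=
      rpow_lt_rpow_of_exponent_lt hbase (by linarith)
    rw [hι, if_pos (by rw [hγ2]; linarith), iotaBranch]
  have hcont : ContinuousAt (fun α => iotaBranch P1 (γ1f α) (γ2f α)) α0 := by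
    have hbase0 : 1 + P1 ≠ 0 := by linarith
    have hcγ1 : ContinuousAt γ1f α0 := by
      rw [funext hγ1]
      fun_prop (disch := exact Or.inl hbase0)
    have hcγ2 : ContinuousAt γ2f α0 := by
      rw [funext hγ2]
      fun_prop (disch := exact Or.inl hbase0)
    refine hcγ1.iotaBranch hcγ2 ?_
    rw [hγ1α0, hγ2α0]
    exact iotaBranch_denom_at_threshold_ne_zero hP1
  refine ⟨?_, hγ1α0, ?_⟩
  · have h := (hcont.tendsto.mono_left nhdsWithin_le_nhds).congr' hbranch.symm
    rwa [hγ1α0, hγ2α0, iotaBranch_at_threshold hP1] at h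
  · have hs0 : √(1 + 2 * P1) ≠ 0 := (sqrt_pos.2 (by linarith)).ne'
    rw [hγ1α0, sub_add_cancel, sub_div, div_self hs0]

/-- Let `α0 ∈ (0,1)` be the unique value with
`(1+P1)^{2·α0} = 1 + 2·P1` (so `γ2(α0) = 2·P1`). Then the one-sided limit of
`ι(α)` as `α → α0⁺` equals `(1/4)·(1 − 1/√(1 + 2·P1))`, which also equals
`(1/4)·γ1(α0)/(γ1(α0) + 1)` with `γ1(α0) = √(1 + 2·P1) − 1`. -/
theorem stmt18 (P1 : ℝ) (hP1 : 0 < P1)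
    (γ1f γ2f ιf : ℝ → ℝ)
    (hγ1 : ∀ α, γ1f α = (1 + P1) ^ α - 1)
    (hγ2 : ∀ α, γ2f α = (1 + P1) ^ (2 * α) - 1)
    (hι : ∀ α, ιf α = if 2 * P1 < γ2f α then
        (P1 - γ1f α) ^ 2
          / ((γ2f α - γ1f α) * (Real.sqrt (γ2f α - 2 * P1) - γ1f α) ^ 2)
        else 0)
    (α0 : ℝ) (hα0 : α0 ∈ Set.Ioo (0:ℝ) 1)
    (hα0eq : (1 + P1) ^ (2 * α0) = 1 + 2 * P1)
    (hα0uniq : ∀ β ∈ Set.Ioo (0:ℝ) 1, (1 + P1) ^ (2 * β) = 1 + 2 * P1 → β = α0) :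
    Filter.Tendsto ιf (nhdsWithin α0 (Set.Ioi α0))
      (nhds ((1 / 4) * (1 - 1 / Real.sqrt (1 + 2 * P1))))
    ∧ γ1f α0 = Real.sqrt (1 + 2 * P1) - 1
    ∧ (1 / 4) * (1 - 1 / Real.sqrt (1 + 2 * P1))
        = (1 / 4) * (γ1f α0 / (γ1f α0 + 1)) :=
  stmt18_general P1 hP1 γ1f γ2f ιf hγ1 hγ2 hι α0 hα0eq
end

section
/- Assume 2·P1 < γ2. Then the thresholds satisfy the chain of inequalities 1 − P1/γ2 ≥ μ(α) ≥ ι(α) > 0, where μ(α) = 1 − P1/(γ2 − γ1) and ι(α) = (P1 − γ1)² / [(γ2 − γ1)·(√(γ2 − 2·P1) − γ1)²]. -/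
/-- Assume `2·P1 < γ2` (interference-limited regime). Then the
thresholds satisfy `1 − P1/γ2 ≥ μ(α) ≥ ι(α) > 0`, where
`μ(α) = 1 − P1/(γ2 − γ1)` and
`ι(α) = (P1 − γ1)² / [(γ2 − γ1)·(√(γ2 − 2·P1) − γ1)²]`. -/
theorem stmt19 (P1 α γ1 γ2 : ℝ)
    (hP1 : 0 < P1) (hα : α ∈ Set.Ioo (0:ℝ) 1)
    (hγ1 : γ1 = (1 + P1) ^ α - 1) (hγ2 : γ2 = (1 + P1) ^ (2 * α) - 1)
    (h2P1 : 2 * P1 < γ2) :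
    1 - P1 / γ2 ≥ 1 - P1 / (γ2 - γ1)
    ∧ 1 - P1 / (γ2 - γ1)
        ≥ (P1 - γ1) ^ 2 / ((γ2 - γ1) * (Real.sqrt (γ2 - 2 * P1) - γ1) ^ 2)
    ∧ (P1 - γ1) ^ 2 / ((γ2 - γ1) * (Real.sqrt (γ2 - 2 * P1) - γ1) ^ 2) > 0 := by
  obtain ⟨hα0, hα1⟩ := hα
  have h1 : (1:ℝ) < 1 + P1 := by linarith
  have hγ1pos : 0 < γ1 := by
    rw [hγ1, sub_pos]
    exact Real.one_lt_rpow_iff_of_pos (by linarith) |>.mpr (Or.inl ⟨h1, hα0⟩)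
  have hγ1P1 : γ1 < P1 := by
    have : (1 + P1) ^ α < (1 + P1) ^ (1:ℝ) :=
      Real.rpow_lt_rpow_of_exponent_lt h1 hα1
    rw [Real.rpow_one] at this
    rw [hγ1]; linarith
  have hsq : γ2 = γ1 ^ 2 + 2 * γ1 := by
    rw [hγ1, hγ2, mul_comm, Real.rpow_mul (by linarith : (0:ℝ) ≤ 1 + P1),
      show ((2:ℝ)) = ((2:ℕ):ℝ) by norm_num, Real.rpow_natCast]
    ring
  set t := Real.sqrt (γ2 - 2 * P1) with ht
  have ht0 : 0 ≤ t := Real.sqrt_nonneg _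
  have ht2 : t ^ 2 = γ2 - 2 * P1 := Real.sq_sqrt (by linarith)
  have htγ1 : t < γ1 := by
    have h2 : t ^ 2 < γ1 ^ 2 := by nlinarith
    nlinarith
  have hd : 0 < γ2 - γ1 := by linarith
  have hdP : P1 < γ2 - γ1 := by linarith
  have hden : 0 < (γ2 - γ1) * (t - γ1) ^ 2 := by
    have : 0 < (t - γ1) ^ 2 := by nlinarith
    positivity
  refine ⟨?_, ?_, ?_⟩
  · have : P1 / γ2 ≤ P1 / (γ2 - γ1) :=
      div_le_div_of_nonneg_left hP1.le hd (by linarith)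
    linarith
  · rw [ge_iff_le, div_le_iff₀ hden]
    have hμ : (1 - P1 / (γ2 - γ1)) * (γ2 - γ1) = γ2 - γ1 - P1 := by
      field_simp
    have key : (P1 - γ1) ^ 2 ≤ (γ2 - γ1 - P1) * (t - γ1) ^ 2 := by
      nlinarith [sq_nonneg ((γ1 - t) ^ 2), sq_nonneg (γ1 - t)]
    calc (P1 - γ1) ^ 2 ≤ (γ2 - γ1 - P1) * (t - γ1) ^ 2 := key
      _ = (1 - P1 / (γ2 - γ1)) * ((γ2 - γ1) * (t - γ1) ^ 2) := by
          rw [← mul_assoc, hμ]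
  · apply div_pos _ hden
    have : 0 < P1 - γ1 := by linarith
    positivity
end
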